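/- arXiv:math/9804081 — 2 statements merged into one kernel-verified Lean document; each statement's English description precedes it below -/
import Mathlib

section
/- For every natural number r ≥ 0, the assignment sending the class of a polynomial p to the class of (β + (−1)^{r+1}·8)·p gives a well-defined and injective ℂ[α,β]-linear map F̄_r → F̄_{r+1}. -/
/-!
Write `b = β + (−1)^{r+1}·8`, `A_r = R̄¹_r`, `B_r = R̄²_r`. Since `B_{r+1} = b·A_r` and
`r²·b·B_r = b·A_{r+1} − α·B_{r+1}`, multiplication by `b` maps `J̄_r` into `J̄_{r+1}`.
Conversely, if `b·p = g·A_{r+1} + h·b·A_r`, then the prime `b` divides `g·A_{r+1}` but not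
`A_{r+1}`: setting `β = −(−1)^{r+1}·8` turns every `A_k` into a monic polynomial of degree `k`
in `α`. Hence `b ∣ g`, and cancelling `b` gives `p ∈ (A_{r+1}, A_r) ⊆ J̄_r`.
-/

open MvPolynomial

/-- The pair (R̄¹_r, R̄²_r) of polynomials in ℂ[α,β] (α = X 0, β = X 1), defined by
R̄¹_0 = 1, R̄²_0 = 0 and the recursion R̄¹_{r+1} = α·R̄¹_r + r²·R̄²_r,
R̄²_{r+1} = (β + (−1)^{r+1}·8)·R̄¹_r. -/
noncomputable def Rb : ℕ → MvPolynomial (Fin 2) ℂ × MvPolynomial (Fin 2) ℂ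
  | 0 => (1, 0)
  | (r + 1) =>
      (X 0 * (Rb r).1 + C ((r : ℂ) ^ 2) * (Rb r).2,
       (X 1 + C ((-1 : ℂ) ^ (r + 1) * 8)) * (Rb r).1)

/-- The ideal J̄_r = (R̄¹_r, R̄²_r) ⊆ ℂ[α,β]. -/
noncomputable def Jb (r : ℕ) : Ideal (MvPolynomial (Fin 2) ℂ) :=
  Ideal.span {(Rb r).1, (Rb r).2}

namespace MvPolynomial

variable {σ R : Type*} [CommRing R] [IsDomain R]

theorem irreducible_X_add_C (i : σ) (c : R) : Irreducible (X i + C c : MvPolynomial σ R) := by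
  classical
  refine irreducible_of_totalDegree_eq_one ?_ fun x hx => isUnit_iff_dvd_one.mpr ?_
  · rw [totalDegree_add_eq_left_of_totalDegree_lt] <;> simp [totalDegree_X]
  · simpa [coeff_X, coeff_C, Ne.symm (Finsupp.single_ne_zero.mpr one_ne_zero)]
      using hx (Finsupp.single i 1)

theorem prime_X_add_C [UniqueFactorizationMonoid R] (i : σ) (c : R) :
    Prime (X i + C c : MvPolynomial σ R) :=
  (irreducible_X_add_C i c).prime

end MvPolynomial

section Specialization

open Polynomial (monic_X degree_X degree_C_le degree_mul degree_mul_le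
  degree_add_eq_left_of_degree_lt)

theorem aeval_Rb_fst_monic_and_degrees (d : ℂ) (k : ℕ) :
    (aeval ![Polynomial.X, Polynomial.C d] (Rb k).1).Monic ∧
      (aeval ![Polynomial.X, Polynomial.C d] (Rb k).1).degree = k ∧
      (aeval ![Polynomial.X, Polynomial.C d] (Rb k).2).degree < k := by
  induction k with
  | zero => simp [Rb]
  | succ k ih =>
    obtain ⟨hmonic, hdeg, hlt⟩ := ih
    set φ : MvPolynomial (Fin 2) ℂ →ₐ[ℂ] Polynomial ℂ := aeval ![Polynomial.X, Polynomial.C d]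
    have hfst : φ (Rb (k + 1)).1 =
        Polynomial.X * φ (Rb k).1 + Polynomial.C ((k : ℂ) ^ 2) * φ (Rb k).2 := by
      simp [φ, Rb]
    have hsnd : φ (Rb (k + 1)).2 = Polynomial.C (d + (-1) ^ (k + 1) * 8) * φ (Rb k).1 := by
      simp [φ, Rb]
    have hXdeg : (Polynomial.X * φ (Rb k).1).degree = ↑(k + 1) := by
      rw [degree_mul, degree_X, hdeg]; push_cast; ring
    have hCdeg (s : ℂ) (p : Polynomial ℂ) (hp : p.degree < ↑(k + 1)) :
        (Polynomial.C s * p).degree < ↑(k + 1) :=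
      (degree_mul_le _ _).trans_lt <| by grw [degree_C_le, zero_add]; exact hp
    have hk : (k : WithBot ℕ) < ↑(k + 1) := by exact_mod_cast k.lt_succ_self
    have hlt' : (Polynomial.C ((k : ℂ) ^ 2) * φ (Rb k).2).degree
        < (Polynomial.X * φ (Rb k).1).degree :=
      hXdeg ▸ hCdeg _ _ (hlt.trans hk)
    refine ⟨hfst ▸ (monic_X.mul hmonic).add_of_left hlt', ?_, hsnd ▸ hCdeg _ _ (hdeg ▸ hk)⟩
    rw [hfst, degree_add_eq_left_of_degree_lt hlt', hXdeg]

end Specialization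

theorem X_add_C_not_dvd_Rb_fst (c : ℂ) (k : ℕ) : ¬ (X 1 + C c) ∣ (Rb k).1 := by
  intro hdvd
  set φ : MvPolynomial (Fin 2) ℂ →ₐ[ℂ] Polynomial ℂ := aeval ![Polynomial.X, Polynomial.C (-c)]
  have hφ : φ (X 1 + C c) = 0 := by simp [φ]
  have := map_dvd φ hdvd
  rw [hφ, zero_dvd_iff] at this
  exact (aeval_Rb_fst_monic_and_degrees (-c) k).1.ne_zero this

theorem Rb_fst_mem_Jb (r : ℕ) : (Rb r).1 ∈ Jb r :=
  Ideal.subset_span (Set.mem_insert _ _)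

theorem Rb_snd_mem_Jb (r : ℕ) : (Rb r).2 ∈ Jb r :=
  Ideal.subset_span (Set.mem_insert_of_mem _ rfl)

theorem Rb_succ_fst_mem_Jb (r : ℕ) : (Rb (r + 1)).1 ∈ Jb r :=
  Ideal.add_mem _ (Ideal.mul_mem_left _ _ (Rb_fst_mem_Jb r))
    (Ideal.mul_mem_left _ _ (Rb_snd_mem_Jb r))

theorem mul_mem_Jb_succ_iff (r : ℕ) (p : MvPolynomial (Fin 2) ℂ) :
    (X 1 + C ((-1 : ℂ) ^ (r + 1) * 8)) * p ∈ Jb (r + 1) ↔ p ∈ Jb r := by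
  set b : MvPolynomial (Fin 2) ℂ := X 1 + C ((-1 : ℂ) ^ (r + 1) * 8)
  have hfst : (Rb (r + 1)).1 = X 0 * (Rb r).1 + C ((r : ℂ) ^ 2) * (Rb r).2 := rfl
  have hsnd : (Rb (r + 1)).2 = b * (Rb r).1 := rfl
  constructor
  · intro hp
    obtain ⟨g, h, hgh⟩ := Ideal.mem_span_pair.mp hp
    rw [hsnd] at hgh
    have hb : Prime b := MvPolynomial.prime_X_add_C 1 _
    obtain ⟨g', rfl⟩ : b ∣ g :=
      (hb.dvd_or_dvd ⟨p - h * (Rb r).1, by linear_combination hgh⟩).resolve_right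
        (X_add_C_not_dvd_Rb_fst _ (r + 1))
    have hp : p = g' * (Rb (r + 1)).1 + h * (Rb r).1 :=
      mul_left_cancel₀ hb.ne_zero (by linear_combination -hgh)
    rw [hp]
    exact Ideal.add_mem _ (Ideal.mul_mem_left _ _ (Rb_succ_fst_mem_Jb r))
      (Ideal.mul_mem_left _ _ (Rb_fst_mem_Jb r))
  · intro hp
    suffices Jb r ≤ Submodule.comap (LinearMap.mulLeft _ b) (Jb (r + 1)) from this hp
    refine Ideal.span_le.mpr ?_
    rintro x (rfl | rfl) <;> change b * _ ∈ Jb (r + 1)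
    · exact hsnd ▸ Rb_snd_mem_Jb (r + 1)
    rcases eq_or_ne r 0 with rfl | hr
    · simp [Rb]
    have hunit : IsUnit (C ((r : ℂ) ^ 2) : MvPolynomial (Fin 2) ℂ) :=
      (IsUnit.mk0 _ (pow_ne_zero 2 (Nat.cast_ne_zero.mpr hr))).map C
    have hkey :
        C ((r : ℂ) ^ 2) * (b * (Rb r).2) = b * (Rb (r + 1)).1 - X 0 * (Rb (r + 1)).2 := by
      rw [hfst, hsnd]; ring
    refine (Ideal.unit_mul_mem_iff_mem _ hunit).mp (hkey ▸ ?_)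
    exact Ideal.sub_mem _ (Ideal.mul_mem_left _ _ (Rb_fst_mem_Jb _))
      (Ideal.mul_mem_left _ _ (Rb_snd_mem_Jb _))

/-- For every r ≥ 0, the assignment sending the class of a polynomial p in F̄_r = ℂ[α,β]/J̄_r to
the class of (β + (−1)^{r+1}·8)·p in F̄_{r+1} gives a well-defined and injective
ℂ[α,β]-linear map F̄_r → F̄_{r+1}. -/
theorem stmt5 (r : ℕ) :
    ∃ f : (MvPolynomial (Fin 2) ℂ ⧸ Jb r) →ₗ[MvPolynomial (Fin 2) ℂ]
        (MvPolynomial (Fin 2) ℂ ⧸ Jb (r + 1)),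
      (∀ p : MvPolynomial (Fin 2) ℂ,
        f (Ideal.Quotient.mk (Jb r) p) =
          Ideal.Quotient.mk (Jb (r + 1)) ((X 1 + C ((-1 : ℂ) ^ (r + 1) * 8)) * p)) ∧
      Function.Injective f := by
  set b : MvPolynomial (Fin 2) ℂ := X 1 + C ((-1 : ℂ) ^ (r + 1) * 8)
  have hcomap : Submodule.comap (LinearMap.mulLeft _ b) (Jb (r + 1)) = Jb r :=
    Submodule.ext (mul_mem_Jb_succ_iff r)
  refine ⟨(Jb r).mapQ (Jb (r + 1)) (LinearMap.mulLeft _ b) hcomap.ge, fun p => rfl, ?_⟩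
  rw [← LinearMap.ker_eq_bot, Submodule.ker_mapQ, hcomap, Submodule.mkQ_map_self]
end

section
/- For every natural number r ≥ 1, the polynomial (β² − 64)^{⌈r/2⌉} belongs to the ideal J̄_r of ℂ[α,β], where ⌈r/2⌉ denotes the least integer ≥ r/2. -/
open MvPolynomial

/-!
Consecutive factors β + (−1)^r·8 and β + (−1)^{r+1}·8 multiply to β² − 64. Feeding this
into two steps of the recursion shows (β² − 64)·J̄_r ⊆ J̄_{r+2} for r ≥ 1 (dividing by the
nonzero scalars (r+1)² and r² on the way), so the claim follows by induction from
β² − 64 ∈ J̄_1 and β² − 64 ∈ J̄_2.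
-/

lemma MvPolynomial.C_mul_mem_ideal_iff {σ K : Type*} [Field K] (I : Ideal (MvPolynomial σ K))
    {k : K} (hk : k ≠ 0) {P : MvPolynomial σ K} : C k * P ∈ I ↔ P ∈ I :=
  I.unit_mul_mem_iff_mem (hk.isUnit.map C)

namespace Rb

noncomputable def signFactor (r : ℕ) : MvPolynomial (Fin 2) ℂ :=
  X 1 + C ((-1 : ℂ) ^ r * 8)

lemma signFactor_mul_signFactor_succ (r : ℕ) :
    signFactor r * signFactor (r + 1) = X 1 ^ 2 - C 64 := by
  have hsucc : (-1 : ℂ) ^ (r + 1) * 8 = -((-1) ^ r * 8) := by ring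
  have hsq : (C ((-1 : ℂ) ^ r * 8) : MvPolynomial (Fin 2) ℂ) ^ 2 = C 64 := by
    rw [← C_pow, mul_pow, ← pow_mul, mul_comm r, pow_mul]
    norm_num
  rw [signFactor, signFactor, hsucc, C_neg]
  linear_combination -hsq

lemma succ_fst (r : ℕ) :
    (Rb (r + 1)).1 = X 0 * (Rb r).1 + C ((r : ℂ) ^ 2) * (Rb r).2 := rfl

lemma succ_snd (r : ℕ) : (Rb (r + 1)).2 = signFactor (r + 1) * (Rb r).1 := rfl

end Rb

open Rb

namespace Jb

lemma fst_mem (r : ℕ) : (Rb r).1 ∈ Jb r := Ideal.subset_span (by simp)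

lemma snd_mem (r : ℕ) : (Rb r).2 ∈ Jb r := Ideal.subset_span (by simp)

lemma mul_fst_succ_mem_add_two (r : ℕ) : (X 1 ^ 2 - C 64) * (Rb (r + 1)).1 ∈ Jb (r + 2) := by
  rw [← signFactor_mul_signFactor_succ, mul_assoc, ← succ_snd]
  exact Ideal.mul_mem_left _ _ (snd_mem _)

lemma mul_fst_mem_add_two (r : ℕ) : (X 1 ^ 2 - C 64) * (Rb r).1 ∈ Jb (r + 2) := by
  have hr : ((r + 1 : ℕ) : ℂ) ≠ 0 := Nat.cast_ne_zero.mpr r.succ_ne_zero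
  rw [← C_mul_mem_ideal_iff _ (pow_ne_zero 2 hr)]
  have h : C (((r + 1 : ℕ) : ℂ) ^ 2) * ((X 1 ^ 2 - C 64) * (Rb r).1) =
      signFactor (r + 2) * (Rb (r + 2)).1 - X 0 * (Rb (r + 2)).2 := by
    rw [succ_fst, succ_snd, succ_snd, ← signFactor_mul_signFactor_succ (r + 1)]
    ring
  rw [h]
  exact sub_mem (Ideal.mul_mem_left _ _ (fst_mem _)) (Ideal.mul_mem_left _ _ (snd_mem _))

lemma mul_snd_mem_add_two {r : ℕ} (hr : r ≠ 0) :
    (X 1 ^ 2 - C 64) * (Rb r).2 ∈ Jb (r + 2) := by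
  rw [← C_mul_mem_ideal_iff _ (pow_ne_zero 2 (Nat.cast_ne_zero.mpr hr : (r : ℂ) ≠ 0))]
  have h : C ((r : ℂ) ^ 2) * ((X 1 ^ 2 - C 64) * (Rb r).2) =
      (X 1 ^ 2 - C 64) * (Rb (r + 1)).1 - X 0 * ((X 1 ^ 2 - C 64) * (Rb r).1) := by
    rw [succ_fst]
    ring
  rw [h]
  exact sub_mem (mul_fst_succ_mem_add_two r) (Ideal.mul_mem_left _ _ (mul_fst_mem_add_two r))

lemma mul_mem_add_two {r : ℕ} (hr : r ≠ 0) {P : MvPolynomial (Fin 2) ℂ} (hP : P ∈ Jb r) :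
    (X 1 ^ 2 - C 64) * P ∈ Jb (r + 2) := by
  obtain ⟨a, b, rfl⟩ := Ideal.mem_span_pair.mp hP
  rw [mul_add, mul_left_comm, mul_left_comm _ b]
  exact add_mem (Ideal.mul_mem_left _ _ (mul_fst_mem_add_two r))
    (Ideal.mul_mem_left _ _ (mul_snd_mem_add_two hr))

lemma sq_sub_mem_one : (X 1 ^ 2 - C 64 : MvPolynomial (Fin 2) ℂ) ∈ Jb 1 := by
  have h : signFactor 0 * (Rb 1).2 = X 1 ^ 2 - C 64 := by
    rw [succ_snd, ← mul_assoc, signFactor_mul_signFactor_succ]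
    exact mul_one _
  rw [← h]
  exact Ideal.mul_mem_left _ _ (snd_mem 1)

lemma sq_sub_mem_two : (X 1 ^ 2 - C 64 : MvPolynomial (Fin 2) ℂ) ∈ Jb 2 :=
  mul_one (X 1 ^ 2 - C 64 : MvPolynomial (Fin 2) ℂ) ▸ mul_fst_mem_add_two 0

lemma pow_succ_mem_add_two_mul {r : ℕ} (hr : r ≠ 0)
    (h : (X 1 ^ 2 - C 64 : MvPolynomial (Fin 2) ℂ) ∈ Jb r) (n : ℕ) :
    (X 1 ^ 2 - C 64 : MvPolynomial (Fin 2) ℂ) ^ (n + 1) ∈ Jb (r + 2 * n) := by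
  induction n with
  | zero => simpa using h
  | succ n ih =>
    rw [pow_succ', show r + 2 * (n + 1) = r + 2 * n + 2 by ring]
    exact mul_mem_add_two (by omega) ih

end Jb

/-- ⌈r/2⌉ is written (r + 1) / 2 in natural-number division. -/
theorem stmt17 (r : ℕ) (hr : 1 ≤ r) :
    ((X 1 : MvPolynomial (Fin 2) ℂ) ^ 2 - C 64) ^ ((r + 1) / 2) ∈ Jb r := by
  obtain ⟨n, rfl | rfl⟩ : ∃ n, r = 1 + 2 * n ∨ r = 2 + 2 * n := ⟨(r - 1) / 2, by omega⟩
  · rw [show (1 + 2 * n + 1) / 2 = n + 1 by omega]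
    exact Jb.pow_succ_mem_add_two_mul one_ne_zero Jb.sq_sub_mem_one n
  · rw [show (2 + 2 * n + 1) / 2 = n + 1 by omega]
    exact Jb.pow_succ_mem_add_two_mul two_ne_zero Jb.sq_sub_mem_two n
end
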